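/- Let f and g be polynomials in two complex variables, and let J = (∂f/∂x)(∂g/∂y) − (∂f/∂y)(∂g/∂x) be their Jacobian determinant. Then f and g are algebraically independent over ℂ if and only if J is not the zero polynomial. -/

import Mathlib

/-!
If `h(f, g) = 0` with `h ≠ 0` of minimal degree, the chain rule says that
`(h_u(f, g), h_v(f, g))` lies in the kernel of the Jacobian matrix of `(f, g)`. When `J ≠ 0`
both entries vanish, so by minimality `h_u = h_v = 0`, and `h` is a nonzero constant: absurd.

Conversely, `ℂ[x, y]` has transcendence degree 2, so `f, g, x` satisfy a relation
`P(f, g, x) = 0`; taking `P` of minimal degree, `P_z(f, g, x) ≠ 0` because `f, g` are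
independent, and the chain rule writes `P_z(f, g, x) · ∇x` as a combination of `∇f` and `∇g`.
The same holds for `y`, and if `J = 0` these two relations force `∇f = 0`, i.e. `f` constant.
-/

open MvPolynomial

theorem Derivation.apply_aeval_eq_sum_pderiv {R S σ : Type*} [CommSemiring R]
    [CommSemiring S] [Algebra R S] [Fintype σ] (D : Derivation R S S) (x : σ → S)
    (p : MvPolynomial σ R) : D (aeval x p) = ∑ i, aeval x (pderiv i p) * D (x i) := by
  classical
  induction p using MvPolynomial.induction_on with
  | C a => simp [Derivation.map_algebraMap]
  | add p q hp hq => simp only [map_add, hp, hq, add_mul, Finset.sum_add_distrib]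
  | mul_X p j hp =>
    simp only [map_mul, aeval_X, Derivation.leibniz, pderiv_X, map_add, add_mul,
      Finset.sum_add_distrib, smul_eq_mul, hp, Finset.mul_sum]
    simp [Pi.single_apply, mul_comm, mul_left_comm]

namespace MvPolynomial

section pderiv

variable {R σ : Type*}

theorem totalDegree_pderiv_lt [CommSemiring R] {p : MvPolynomial σ R} (i : σ)
    (hp : pderiv i p ≠ 0) : (pderiv i p).totalDegree < p.totalDegree := by
  have hpos : 0 < p.totalDegree := by
    by_contra! h
    rw [Nat.le_zero, totalDegree_eq_zero_iff_eq_C] at h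
    exact hp (by rw [h, pderiv_C])
  refine (Finset.sup_lt_iff hpos).2 fun m hm => ?_
  have hcoeff : coeff (m + Finsupp.single i 1) p ≠ 0 := by
    intro h
    rw [mem_support_iff, coeff_pderiv, h, zero_mul] at hm
    exact hm rfl
  have := le_totalDegree (mem_support_iff.2 hcoeff)
  rw [Finsupp.sum_add_index' (fun _ => rfl) (fun _ _ _ => rfl),
    Finsupp.sum_single_index rfl] at this
  omega

variable [CommSemiring R] [NoZeroDivisors R] [CharZero R]

theorem pderiv_eq_zero_iff_notMem_vars {p : MvPolynomial σ R} {i : σ} :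
    pderiv i p = 0 ↔ i ∉ p.vars := by
  refine ⟨fun hp hi => ?_, pderiv_eq_zero_of_notMem_vars⟩
  obtain ⟨m, hm, him⟩ := (mem_vars_iff_mem_support i).1 hi
  have hle : Finsupp.single i 1 ≤ m :=
    Finsupp.single_le_iff.2 (Nat.one_le_iff_ne_zero.2 (Finsupp.mem_support_iff.1 him))
  have := congrArg (coeff (m - Finsupp.single i 1)) hp
  rw [coeff_pderiv, tsub_add_cancel_of_le hle, coeff_zero, mul_eq_zero] at this
  exact this.elim (mem_support_iff.1 hm) (Nat.cast_add_one_ne_zero _)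

theorem eq_C_of_forall_pderiv_eq_zero {p : MvPolynomial σ R} (hp : ∀ i, pderiv i p = 0) :
    p = C (coeff 0 p) :=
  vars_eq_empty_iff_eq_C.1 <| Finset.eq_empty_of_forall_notMem fun i =>
    pderiv_eq_zero_iff_notMem_vars.1 (hp i)

end pderiv

theorem not_algebraicIndependent_of_card_lt {R ι σ : Type*} [CommRing R] [IsDomain R]
    [Fintype ι] [Fintype σ] (x : ι → MvPolynomial σ R) (h : Fintype.card σ < Fintype.card ι) :
    ¬ AlgebraicIndependent R x := by
  intro hx
  have hcard := hx.lift_cardinalMk_le_trdeg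
  rw [trdeg_of_isDomain] at hcard
  simp only [Cardinal.mk_fintype, Cardinal.lift_natCast, Nat.cast_le] at hcard
  exact h.not_ge hcard

theorem exists_minimal_annihilator {R S σ : Type*} [CommRing R] [CommRing S] [Algebra R S]
    {x : σ → S} (hx : ¬ AlgebraicIndependent R x) :
    ∃ P : MvPolynomial σ R, P ≠ 0 ∧ aeval x P = 0 ∧
      ∀ i, aeval x (pderiv i P) = 0 → pderiv i P = 0 := by
  have hann : ∃ P : MvPolynomial σ R, P ≠ 0 ∧ aeval x P = 0 := by
    simpa [algebraicIndependent_iff, and_comm] using hx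
  obtain ⟨P, ⟨hP0, hPx⟩, hmin⟩ := (measure totalDegree).wf.has_min _ hann
  refine ⟨P, hP0, hPx, fun i hi => by_contra fun hne => ?_⟩
  exact hmin _ ⟨hne, hi⟩ (totalDegree_pderiv_lt i hne)

theorem exists_annihilator_snoc_aeval_pderiv_last_ne_zero {R S : Type*} [CommRing R]
    [NoZeroDivisors R] [CharZero R] [CommRing S] [Algebra R S] {n : ℕ} {x : Fin n → S}
    (hx : AlgebraicIndependent R x) {y : S} (hxy : ¬ AlgebraicIndependent R (Fin.snoc x y)) :
    ∃ P : MvPolynomial (Fin (n + 1)) R, aeval (Fin.snoc x y) P = 0 ∧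
      aeval (Fin.snoc x y) (pderiv (Fin.last n) P) ≠ 0 := by
  obtain ⟨P, hP0, hPx, hmin⟩ := exists_minimal_annihilator hxy
  refine ⟨P, hPx, fun hlast => hP0 ?_⟩
  have hvars : (P.vars : Set (Fin (n + 1))) ⊆ Set.range Fin.castSucc := by
    intro i hi
    obtain ⟨j, rfl⟩ | rfl := Fin.eq_castSucc_or_eq_last i
    · exact ⟨j, rfl⟩
    · exact absurd hi (pderiv_eq_zero_iff_notMem_vars.1 (hmin _ hlast))
  obtain ⟨Q, rfl⟩ := exists_rename_eq_of_vars_subset_range P _ (Fin.castSucc_injective n) hvars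
  rw [aeval_rename, Fin.snoc_comp_castSucc] at hPx
  rw [hx.eq_zero_of_aeval_eq_zero Q hPx, map_zero]

section jacobian

variable {R σ : Type*} [CommRing R] [IsDomain R] [CharZero R]

theorem algebraicIndependent_of_jacobian_ne_zero {f g : MvPolynomial σ R} {i j : σ}
    (hJ : pderiv i f * pderiv j g - pderiv j f * pderiv i g ≠ 0) :
    AlgebraicIndependent R ![f, g] := by
  by_contra hdep
  obtain ⟨P, hP0, hPx, hmin⟩ := exists_minimal_annihilator hdep
  set a := aeval ![f, g] (pderiv 0 P)
  set b := aeval ![f, g] (pderiv 1 P)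
  have hchain (k : σ) : a * pderiv k f + b * pderiv k g = 0 := by
    have h := (pderiv k).apply_aeval_eq_sum_pderiv ![f, g] P
    rw [hPx, map_zero, Fin.sum_univ_two] at h
    exact h.symm
  have ha : a = 0 := (mul_eq_zero.1 (by
    linear_combination pderiv j g * hchain i - pderiv i g * hchain j)).resolve_right hJ
  have hb : b = 0 := (mul_eq_zero.1 (by
    linear_combination pderiv i f * hchain j - pderiv j f * hchain i)).resolve_right hJ
  have hPC := eq_C_of_forall_pderiv_eq_zero (Fin.forall_fin_two.2 ⟨hmin 0 ha, hmin 1 hb⟩)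
  rw [hPC, aeval_C, algebraMap_eq, C_eq_zero] at hPx
  exact hP0 (by rw [hPC, hPx, C_0])

theorem exists_pderiv_relation_X_of_algebraicIndependent {f g : MvPolynomial (Fin 2) R}
    (hfg : AlgebraicIndependent R ![f, g]) (i : Fin 2) :
    ∃ a b c : MvPolynomial (Fin 2) R, c ≠ 0 ∧
      ∀ k, a * pderiv k f + b * pderiv k g + c * pderiv k (X i) = 0 := by
  have hdep : ¬ AlgebraicIndependent R (Fin.snoc ![f, g] (X i)) :=
    not_algebraicIndependent_of_card_lt _ (by simp)
  obtain ⟨P, hPx, hc⟩ := exists_annihilator_snoc_aeval_pderiv_last_ne_zero hfg hdep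
  refine ⟨aeval (Fin.snoc ![f, g] (X i)) (pderiv 0 P),
    aeval (Fin.snoc ![f, g] (X i)) (pderiv 1 P), _, hc, fun k => ?_⟩
  have h := (pderiv k).apply_aeval_eq_sum_pderiv (Fin.snoc ![f, g] (X i)) P
  rw [hPx, map_zero, Fin.sum_univ_castSucc, Fin.sum_univ_two] at h
  exact h.symm

theorem jacobian_ne_zero_of_algebraicIndependent {f g : MvPolynomial (Fin 2) R}
    (hfg : AlgebraicIndependent R ![f, g]) :
    pderiv 0 f * pderiv 1 g - pderiv 1 f * pderiv 0 g ≠ 0 := by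
  intro hJ
  obtain ⟨a, b, c, hc, hrel⟩ := exists_pderiv_relation_X_of_algebraicIndependent hfg 0
  obtain ⟨a', b', c', hc', hrel'⟩ := exists_pderiv_relation_X_of_algebraicIndependent hfg 1
  have hx := hrel 0
  have hy := hrel 1
  have hx' := hrel' 0
  have hy' := hrel' 1
  simp only [pderiv_X_self, pderiv_X_of_ne (by decide : (0 : Fin 2) ≠ 1),
    pderiv_X_of_ne (by decide : (1 : Fin 2) ≠ 0), mul_zero, mul_one, add_zero] at hx hy hx' hy'
  have hfy : pderiv 1 f = 0 := (mul_eq_zero.1 (by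
    linear_combination pderiv 1 f * hx - pderiv 0 f * hy + b * hJ)).resolve_left hc
  have hfx : pderiv 0 f = 0 := (mul_eq_zero.1 (by
    linear_combination pderiv 0 f * hy' - pderiv 1 f * hx' - b' * hJ)).resolve_left hc'
  have hfC := eq_C_of_forall_pderiv_eq_zero (Fin.forall_fin_two.2 ⟨hfx, hfy⟩)
  have hf := hfg.transcendental 0
  rw [Matrix.cons_val_zero, hfC, ← algebraMap_eq] at hf
  exact hf (isAlgebraic_algebraMap _)

end jacobian

end MvPolynomial

/-- Two polynomials `f, g ∈ ℂ[x,y]` are algebraically independent over `ℂ` if and only if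
their Jacobian determinant is not the zero polynomial. -/
theorem algebraically_independent_iff_jacobian_ne_zero
    (f g : MvPolynomial (Fin 2) ℂ)
    (J : MvPolynomial (Fin 2) ℂ)
    (hJ : J = pderiv 0 f * pderiv 1 g - pderiv 1 f * pderiv 0 g) :
    (∀ h : MvPolynomial (Fin 2) ℂ, aeval ![f, g] h = 0 → h = 0) ↔ J ≠ 0 := by
  rw [← algebraicIndependent_iff, hJ]
  exact ⟨jacobian_ne_zero_of_algebraicIndependent, algebraicIndependent_of_jacobian_ne_zero⟩
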